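/- arXiv:1301.4717 — 4 statements merged into one kernel-verified Lean document; each statement's English description precedes it below -/
import Mathlib

section
/- Theorem (existence and uniqueness for discrete gradient methods). Let B be a bounded set in ℝ^d and suppose there exist positive constants R, L, H such that for each x ∈ B, all u,v,w ∈ B_R(x) and h ∈ [0,H): f̃ satisfies f̃(x,x,0) = f(x), |f̃(u,v,h) − f̃(w,v,h)| ≤ L|u−w|, |f̃(u,v,h) − f̃(u,w,h)| ≤ L|v−w|, |f̃(x,x,h) − f̃(x,x,0)| ≤ Lh|i(x)|; ī is a discrete gradient of I with ī(x,x) = i(x), |ī(u,v) − ī(w,v)| ≤ L|u−w|, |ī(u,v) − ī(u,w)| ≤ L|v−w|; and each of ĩ, î, ĭ satisfies ĩ(x,x,0) = i(x), |ĩ(u,v,h) − ĩ(w,v,h)| ≤ L|u−w|, |ĩ(u,v,h) − ĩ(u,w,h)| ≤ L|v−w|, |ĩ(x,x,h) − ĩ(x,x,0)| ≤ Lh|i(x)|. Define R' := max{R, 10L} and H' := min{H, 1/(10L), 1/(6C₂R'), 1/((36C₂+6)L)}. Then for each x ∈ B and h ∈ [0,H') there exists a unique x' ∈ B_{R'}(x)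 satisfying: x' = x + h S̃(x,x',h) ī(x,x') if i(x) ≠ 0, and x' = x if i(x) = 0, where S̃(x,x',h) := (f̃(x,x',h) ĩ(x,x',h)ᵀ − ĩ(x,x',h) f̃(x,x',h)ᵀ)/(î(x,x',h) · ĭ(x,x',h)). -/
/-!
For `i x ≠ 0` the step equation is the fixed-point equation `x' = x + h S̃ ī (x')`. On the ball of
radius `‖i x‖ / R'` every approximation `f̃, ĩ, ī, î, ĭ` is `L`-Lipschitz in `x'` and within
`‖i x‖ / 5` of its target, so `î · ĭ ≥ (14/25) ‖i x‖²` and `S̃ ī` is bounded by `(36/7) C₂ ‖i x‖`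
with Lipschitz constant below `(36 C₂ + 6) L`. The step size restrictions then make the right-hand
side a contraction of the ball into itself, and Banach's fixed point theorem applies. For
`i x = 0` the ball is `{x}`.
-/

open scoped RealInnerProductSpace

noncomputable section

/-- Membership in the ball `B_R(x) = {z : ‖z − x‖ ≤ ‖i x‖ / R}`. -/
def InBall {d : ℕ} (i : EuclideanSpace ℝ (Fin d) → EuclideanSpace ℝ (Fin d)) (R : ℝ)
    (x z : EuclideanSpace ℝ (Fin d)) : Prop :=
  ‖z - x‖ ≤ ‖i x‖ / R

/-- The consistency and local Lipschitz conditions at the point `x` for an approximation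
`g(·,·,·)` of `target` (conditions (11z)/(12z) of the paper, with balls measured via `i`). -/
def ConsistAt {d : ℕ} (i target : EuclideanSpace ℝ (Fin d) → EuclideanSpace ℝ (Fin d))
    (x : EuclideanSpace ℝ (Fin d)) (R L H : ℝ)
    (g : EuclideanSpace ℝ (Fin d) → EuclideanSpace ℝ (Fin d) → ℝ → EuclideanSpace ℝ (Fin d)) :
    Prop :=
  g x x 0 = target x ∧
    ∀ h : ℝ, 0 ≤ h → h < H →
      (∀ u v w, InBall i R x u → InBall i R x v → InBall i R x w →
        ‖g u v h - g w v h‖ ≤ L * ‖u - w‖ ∧ ‖g u v h - g u w h‖ ≤ L * ‖v - w‖) ∧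
      ‖g x x h - g x x 0‖ ≤ L * h * ‖i x‖

/-- The discrete gradient step equation `x' = x + h S̃(x,x',h) ī(x,x')`, where
`S̃ = (f̃ ĩᵀ − ĩ f̃ᵀ)/(î·ĭ)`, so that
`S̃ ī = ((ĩ·ī) f̃ − (f̃·ī) ĩ)/(î·ĭ)`. -/
def DGEq {d : ℕ}
    (ftil itil ihat ibrev :
      EuclideanSpace ℝ (Fin d) → EuclideanSpace ℝ (Fin d) → ℝ → EuclideanSpace ℝ (Fin d))
    (ibar : EuclideanSpace ℝ (Fin d) → EuclideanSpace ℝ (Fin d) → EuclideanSpace ℝ (Fin d))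
    (x : EuclideanSpace ℝ (Fin d)) (h : ℝ) (x' : EuclideanSpace ℝ (Fin d)) : Prop :=
  x' = x + (h / ⟪ihat x x' h, ibrev x x' h⟫) •
    (⟪itil x x' h, ibar x x'⟫ • ftil x x' h - ⟪ftil x x' h, ibar x x'⟫ • itil x x' h)

open Set Metric Function
open scoped NNReal

theorem existsUnique_isFixedPt_of_lipschitzOnWith {α : Type*} [MetricSpace α] {f : α → α}
    {s : Set α} {k : ℝ≥0} (hs : IsComplete s) (hne : s.Nonempty) (hmaps : MapsTo f s s)
    (hk : k < 1) (hf : LipschitzOnWith k f s) : ∃! y, y ∈ s ∧ IsFixedPt f y := by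
  obtain ⟨x, hx⟩ := hne
  obtain ⟨y, hys, hfy, -⟩ := ContractingWith.exists_fixedPoint' hs hmaps
    ⟨hk, hf.mapsToRestrict hmaps⟩ hx (edist_ne_top _ _)
  refine ⟨y, ⟨hys, hfy⟩, fun z ⟨hzs, hfz⟩ => dist_le_zero.mp ?_⟩
  have hzy : dist z y ≤ k * dist z y := by
    simpa only [hfz.eq, hfy.eq] using hf.dist_le_mul z hzs y hys
  have hk' : (k : ℝ) < 1 := hk
  nlinarith [dist_nonneg (x := z) (y := y)]

section Normed

variable {E : Type*} [NormedAddCommGroup E]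

theorem existsUnique_eq_add_smul [NormedSpace ℝ E] [CompleteSpace E] {T : E → E} {x : E}
    {ρ h B K : ℝ} (hρ : 0 ≤ ρ) (h0 : 0 ≤ h) (hT : ∀ u ∈ closedBall x ρ, ‖T u‖ ≤ B)
    (hTL : ∀ u ∈ closedBall x ρ, ∀ v ∈ closedBall x ρ, ‖T u - T v‖ ≤ K * ‖u - v‖)
    (hB : h * B ≤ ρ) (hK : h * K < 1) :
    ∃! x', x' ∈ closedBall x ρ ∧ x' = x + h • T x' := by
  have hmaps : MapsTo (fun u => x + h • T u) (closedBall x ρ) (closedBall x ρ) := by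
    intro u hu
    rw [mem_closedBall, dist_eq_norm, add_sub_cancel_left, norm_smul, Real.norm_of_nonneg h0]
    exact (mul_le_mul_of_nonneg_left (hT u hu) h0).trans hB
  have hlip : LipschitzOnWith (h * K).toNNReal (fun u => x + h • T u) (closedBall x ρ) := by
    refine LipschitzOnWith.of_dist_le' fun u hu v hv => ?_
    rw [dist_eq_norm, dist_eq_norm, add_sub_add_left_eq_sub, ← smul_sub, norm_smul,
      Real.norm_of_nonneg h0, mul_assoc]
    exact mul_le_mul_of_nonneg_left (hTL u hu v hv) h0
  simpa only [IsFixedPt, eq_comm (b := _ + _)] using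
    existsUnique_isFixedPt_of_lipschitzOnWith isClosed_closedBall.isComplete
      ⟨x, mem_closedBall_self hρ⟩ hmaps (Real.toNNReal_lt_one.mpr hK) hlip

def ApproxOn (s : Set E) (g : E → E) (t : E) (ε L : ℝ) : Prop :=
  (∀ u ∈ s, ‖g u - t‖ ≤ ε) ∧ ∀ u ∈ s, ∀ v ∈ s, ‖g u - g v‖ ≤ L * ‖u - v‖

theorem ApproxOn.norm_le {s : Set E} {g : E → E} {t : E} {ε L : ℝ} (hg : ApproxOn s g t ε L)
    {u : E} (hu : u ∈ s) : ‖g u‖ ≤ ‖t‖ + ε :=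
  (norm_le_norm_add_norm_sub' _ _).trans (by linarith [hg.1 u hu])

theorem approxOn_closedBall_of_lipschitz {g : E → E} {x t : E} {ρ ε L : ℝ} (hL : 0 ≤ L)
    (hlip : ∀ u ∈ closedBall x ρ, ∀ v ∈ closedBall x ρ, ‖g u - g v‖ ≤ L * ‖u - v‖)
    (hx : ‖g x - t‖ + L * ρ ≤ ε) : ApproxOn (closedBall x ρ) g t ε L := by
  refine ⟨fun u hu => ?_, hlip⟩
  have hx_mem : x ∈ closedBall x ρ := mem_closedBall_self (dist_nonneg.trans hu)
  have hux : ‖u - x‖ ≤ ρ := by rwa [mem_closedBall, dist_eq_norm] at hu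
  calc ‖g u - t‖ ≤ ‖g u - g x‖ + ‖g x - t‖ := norm_sub_le_norm_sub_add_norm_sub _ _ _
    _ ≤ L * ρ + ‖g x - t‖ := by gcongr; exact (hlip u hu x hx_mem).trans (by gcongr)
    _ ≤ ε := by linarith

end Normed

section InnerProductSpace

variable {E : Type*} [NormedAddCommGroup E] [InnerProductSpace ℝ E]

/-- `skewApply a b c = (a bᵀ - b aᵀ) c`. -/
def skewApply (a b c : E) : E := ⟪b, c⟫ • a - ⟪a, c⟫ • b

theorem skewApply_sub_skewApply (a b c a' b' c' : E) :
    skewApply a b c - skewApply a' b' c' =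
      skewApply (a - a') b c + skewApply a' (b - b') c + skewApply a' b' (c - c') := by
  simp only [skewApply, inner_sub_left, inner_sub_right]
  module

theorem norm_skewApply_le (a b c : E) : ‖skewApply a b c‖ ≤ 2 * (‖a‖ * ‖b‖ * ‖c‖) := by
  calc ‖skewApply a b c‖ ≤ ‖⟪b, c⟫ • a‖ + ‖⟪a, c⟫ • b‖ := norm_sub_le _ _
    _ ≤ ‖b‖ * ‖c‖ * ‖a‖ + ‖a‖ * ‖c‖ * ‖b‖ := by
      rw [norm_smul, norm_smul]
      gcongr <;> exact norm_inner_le_norm _ _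
    _ = 2 * (‖a‖ * ‖b‖ * ‖c‖) := by ring

theorem norm_skewApply_sub_skewApply_le (a b c a' b' c' : E) :
    ‖skewApply a b c - skewApply a' b' c'‖ ≤
      2 * (‖a - a'‖ * ‖b‖ * ‖c‖ + ‖a'‖ * ‖b - b'‖ * ‖c‖ + ‖a'‖ * ‖b'‖ * ‖c - c'‖) := by
  rw [skewApply_sub_skewApply]
  refine norm_add₃_le.trans ?_
  linarith [norm_skewApply_le (a - a') b c, norm_skewApply_le a' (b - b') c,
    norm_skewApply_le a' b' (c - c')]

theorem abs_inner_sub_inner_le (a b a' b' : E) :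
    |⟪a, b⟫ - ⟪a', b'⟫| ≤ ‖a - a'‖ * ‖b‖ + ‖a'‖ * ‖b - b'‖ := by
  have hsplit : ⟪a, b⟫ - ⟪a', b'⟫ = ⟪a - a', b⟫ + ⟪a', b - b'⟫ := by
    simp only [inner_sub_left, inner_sub_right]
    ring
  rw [hsplit]
  exact (abs_add_le _ _).trans
    (add_le_add (abs_real_inner_le_norm _ _) (abs_real_inner_le_norm _ _))

theorem sq_norm_sub_le_inner_of_norm_sub_le {p q ι : E} {ε : ℝ} (hp : ‖p - ι‖ ≤ ε)
    (hq : ‖q - ι‖ ≤ ε) : ‖ι‖ ^ 2 - 2 * ε * ‖ι‖ - ε ^ 2 ≤ ⟪p, q⟫ := by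
  have hpq := abs_le.mp (abs_inner_sub_inner_le p q ι ι)
  have hqn : ‖q‖ ≤ ‖ι‖ + ε := (norm_le_norm_add_norm_sub' q ι).trans (by linarith)
  rw [real_inner_self_eq_norm_sq] at hpq
  nlinarith [norm_nonneg (p - ι), norm_nonneg ι, norm_nonneg q]

theorem norm_inv_smul_sub_inv_smul_le {a b δ : ℝ} (y z : E) (hδ : 0 < δ) (ha : δ ≤ a)
    (hb : δ ≤ b) : ‖a⁻¹ • y - b⁻¹ • z‖ ≤ ‖y - z‖ / δ + ‖z‖ * |a - b| / δ ^ 2 := by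
  have ha0 : 0 < a := hδ.trans_le ha
  have hb0 : 0 < b := hδ.trans_le hb
  have hsplit : a⁻¹ • y - b⁻¹ • z = a⁻¹ • (y - z) + (a⁻¹ - b⁻¹) • z := by module
  have hinv : |a⁻¹ - b⁻¹| = |a - b| / (a * b) := by
    rw [inv_sub_inv ha0.ne' hb0.ne', abs_div, abs_sub_comm, abs_of_pos (mul_pos ha0 hb0)]
  rw [hsplit]
  refine (norm_add_le _ _).trans (add_le_add ?_ ?_)
  · rw [norm_smul, Real.norm_of_nonneg (inv_nonneg.mpr ha0.le), inv_mul_eq_div]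
    gcongr
  · rw [norm_smul, Real.norm_eq_abs, hinv, mul_comm, mul_div_assoc, sq]
    gcongr

/-- The vector `S̃ ī` of the scheme, with `F, G, C, P, Q` standing for `f̃, ĩ, ī, î, ĭ`. -/
def dgDirection (F G C P Q : E → E) (u : E) : E :=
  ⟪P u, Q u⟫⁻¹ • skewApply (F u) (G u) (C u)

section Estimates

variable {s : Set E} {F G C P Q : E → E} {φ ι : E} {ε L MF M δ : ℝ}

theorem norm_dgDirection_le (hF : ApproxOn s F φ ε L) (hG : ApproxOn s G ι ε L)
    (hC : ApproxOn s C ι ε L) (hP : ApproxOn s P ι ε L) (hQ : ApproxOn s Q ι ε L)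
    (hMF : ‖φ‖ + ε ≤ MF) (hM : ‖ι‖ + ε ≤ M) (hδ : 0 < δ)
    (hδι : δ ≤ ‖ι‖ ^ 2 - 2 * ε * ‖ι‖ - ε ^ 2) {u : E} (hu : u ∈ s) :
    ‖dgDirection F G C P Q u‖ ≤ 2 * (MF * M * M) / δ := by
  have hD : δ ≤ ⟪P u, Q u⟫ :=
    hδι.trans (sq_norm_sub_le_inner_of_norm_sub_le (hP.1 u hu) (hQ.1 u hu))
  have hM0 : 0 ≤ M := (norm_nonneg _).trans ((hG.norm_le hu).trans hM)
  have hMF0 : 0 ≤ MF := (norm_nonneg _).trans ((hF.norm_le hu).trans hMF)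
  rw [dgDirection, norm_smul, Real.norm_of_nonneg (inv_nonneg.mpr (hδ.trans_le hD).le),
    inv_mul_eq_div]
  refine div_le_div₀ (by positivity) ((norm_skewApply_le _ _ _).trans ?_) hδ hD
  gcongr
  exacts [(hF.norm_le hu).trans hMF, (hG.norm_le hu).trans hM, (hC.norm_le hu).trans hM]

theorem norm_dgDirection_sub_le (hF : ApproxOn s F φ ε L) (hG : ApproxOn s G ι ε L)
    (hC : ApproxOn s C ι ε L) (hP : ApproxOn s P ι ε L) (hQ : ApproxOn s Q ι ε L)
    (hMF : ‖φ‖ + ε ≤ MF) (hM : ‖ι‖ + ε ≤ M) (hδ : 0 < δ)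
    (hδι : δ ≤ ‖ι‖ ^ 2 - 2 * ε * ‖ι‖ - ε ^ 2) {u v : E} (hu : u ∈ s) (hv : v ∈ s) :
    ‖dgDirection F G C P Q u - dgDirection F G C P Q v‖ ≤
      (2 * L * M * (M + 2 * MF) / δ + 4 * L * MF * M ^ 3 / δ ^ 2) * ‖u - v‖ := by
  have hD : ∀ w ∈ s, δ ≤ ⟪P w, Q w⟫ := fun w hw =>
    hδι.trans (sq_norm_sub_le_inner_of_norm_sub_le (hP.1 w hw) (hQ.1 w hw))
  have hM0 : 0 ≤ M := (norm_nonneg _).trans ((hG.norm_le hu).trans hM)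
  have hMF0 : 0 ≤ MF := (norm_nonneg _).trans ((hF.norm_le hu).trans hMF)
  have hL0 : 0 ≤ L * ‖u - v‖ := (norm_nonneg _).trans (hF.2 u hu v hv)
  have hN : ‖skewApply (F u) (G u) (C u) - skewApply (F v) (G v) (C v)‖ ≤
      2 * (L * ‖u - v‖ * M * M + MF * (L * ‖u - v‖) * M + MF * M * (L * ‖u - v‖)) := by
    refine (norm_skewApply_sub_skewApply_le _ _ _ _ _ _).trans ?_
    gcongr
    exacts [hF.2 u hu v hv, (hG.norm_le hu).trans hM, (hC.norm_le hu).trans hM,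
      (hF.norm_le hv).trans hMF, hG.2 u hu v hv, (hC.norm_le hu).trans hM,
      (hF.norm_le hv).trans hMF, (hG.norm_le hv).trans hM, hC.2 u hu v hv]
  have hNv : ‖skewApply (F v) (G v) (C v)‖ ≤ 2 * (MF * M * M) := by
    refine (norm_skewApply_le _ _ _).trans ?_
    gcongr
    exacts [(hF.norm_le hv).trans hMF, (hG.norm_le hv).trans hM, (hC.norm_le hv).trans hM]
  have hDuv : |⟪P u, Q u⟫ - ⟪P v, Q v⟫| ≤ L * ‖u - v‖ * M + M * (L * ‖u - v‖) := by
    refine (abs_inner_sub_inner_le _ _ _ _).trans ?_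
    gcongr
    exacts [hP.2 u hu v hv, (hQ.norm_le hu).trans hM, (hP.norm_le hv).trans hM, hQ.2 u hu v hv]
  calc ‖dgDirection F G C P Q u - dgDirection F G C P Q v‖
      ≤ ‖skewApply (F u) (G u) (C u) - skewApply (F v) (G v) (C v)‖ / δ +
          ‖skewApply (F v) (G v) (C v)‖ * |⟪P u, Q u⟫ - ⟪P v, Q v⟫| / δ ^ 2 :=
        norm_inv_smul_sub_inv_smul_le _ _ hδ (hD u hu) (hD v hv)
    _ ≤ 2 * (L * ‖u - v‖ * M * M + MF * (L * ‖u - v‖) * M + MF * M * (L * ‖u - v‖)) / δ +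
          2 * (MF * M * M) * (L * ‖u - v‖ * M + M * (L * ‖u - v‖)) / δ ^ 2 := by
        gcongr
    _ = (2 * L * M * (M + 2 * MF) / δ + 4 * L * MF * M ^ 3 / δ ^ 2) * ‖u - v‖ := by ring

end Estimates

end InnerProductSpace

theorem mul_div_max_le {m R L : ℝ} (hm : 0 ≤ m) (hL : 0 < L) :
    L * (m / max R (10 * L)) ≤ m / 10 := by
  calc L * (m / max R (10 * L))
      ≤ L * (m / (10 * L)) := by gcongr; exact le_max_right _ _
    _ = m / 10 := by field_simp

-- `6/5 m` and `14/25 m²` are `m + ε` and `m² - 2 ε m - ε²` for `m = ‖i x‖` and `ε = m / 5`.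
theorem dgStep_bound_le {m C R' h : ℝ} (hm : 0 < m) (hC : 0 < C) (hR' : 0 < R')
    (hh : h < 1 / (6 * C * R')) :
    h * (2 * (C * m * (6 / 5 * m) * (6 / 5 * m)) / (14 / 25 * m ^ 2)) ≤ m / R' := by
  have hB : 2 * (C * m * (6 / 5 * m) * (6 / 5 * m)) / (14 / 25 * m ^ 2) = 36 / 7 * C * m := by
    field_simp
    ring
  rw [lt_div_iff₀ (by positivity)] at hh
  rw [hB, le_div_iff₀ hR']
  nlinarith [mul_pos hC hm]

theorem dgStep_lipschitz_lt_one {m C L h : ℝ} (hm : 0 < m) (hC : 0 < C) (hL : 0 < L)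
    (hh : h < 1 / ((36 * C + 6) * L)) :
    h * (2 * L * (6 / 5 * m) * (6 / 5 * m + 2 * (C * m)) / (14 / 25 * m ^ 2) +
      4 * L * (C * m) * (6 / 5 * m) ^ 3 / (14 / 25 * m ^ 2) ^ 2) < 1 := by
  have hK : 2 * L * (6 / 5 * m) * (6 / 5 * m + 2 * (C * m)) / (14 / 25 * m ^ 2) +
      4 * L * (C * m) * (6 / 5 * m) ^ 3 / (14 / 25 * m ^ 2) ^ 2 =
      (1500 / 49 * C + 36 / 7) * L := by
    field_simp
    ring
  rw [lt_div_iff₀ (by positivity)] at hh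
  rw [hK]
  nlinarith [mul_pos hC hL]

section Euclidean

variable {d : ℕ}

local notation "𝔼" => EuclideanSpace ℝ (Fin d)

theorem inBall_iff_mem_closedBall {i : 𝔼 → 𝔼} {R : ℝ} {x z : 𝔼} :
    InBall i R x z ↔ z ∈ closedBall x (‖i x‖ / R) := by
  rw [mem_closedBall, dist_eq_norm, InBall]

theorem InBall.self {i : 𝔼 → 𝔼} {R : ℝ} {x v : 𝔼} (hv : InBall i R x v) : InBall i R x x := by
  rw [InBall, sub_self, norm_zero]
  exact (norm_nonneg _).trans hv

theorem approxOn_closedBall_of_inBall {i g : 𝔼 → 𝔼} {x t : 𝔼} {R L ρ ε : ℝ} (hL : 0 ≤ L)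
    (hρR : ρ ≤ ‖i x‖ / R)
    (hlip : ∀ v w, InBall i R x v → InBall i R x w → ‖g v - g w‖ ≤ L * ‖v - w‖)
    (hx : ‖g x - t‖ + L * ρ ≤ ε) : ApproxOn (closedBall x ρ) g t ε L := by
  have hball : closedBall x ρ ⊆ {v | InBall i R x v} := fun v hv =>
    inBall_iff_mem_closedBall.mpr (closedBall_subset_closedBall hρR hv)
  exact approxOn_closedBall_of_lipschitz hL (fun u hu v hv => hlip u v (hball hu) (hball hv)) hx

theorem ConsistAt.approxOn {i t : 𝔼 → 𝔼} {x : 𝔼} {R L H h ρ : ℝ} {g : 𝔼 → 𝔼 → ℝ → 𝔼}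
    (hg : ConsistAt i t x R L H g) (hL : 0 < L) (h0 : 0 ≤ h) (hH : h < H)
    (hh : h < 1 / (10 * L)) (hρR : ρ ≤ ‖i x‖ / R) (hρL : L * ρ ≤ ‖i x‖ / 10) :
    ApproxOn (closedBall x ρ) (fun u => g x u h) (t x) (‖i x‖ / 5) L := by
  obtain ⟨hg0, hgh⟩ := hg
  obtain ⟨hlip, hdrift⟩ := hgh h h0 hH
  refine approxOn_closedBall_of_inBall hL.le hρR
    (fun v w hv hw => (hlip x v w hv.self hv hw).2) ?_
  rw [lt_div_iff₀ (by positivity)] at hh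
  rw [← hg0]
  nlinarith [norm_nonneg (i x)]

theorem dgEq_iff {ftil itil ihat ibrev : 𝔼 → 𝔼 → ℝ → 𝔼} {ibar : 𝔼 → 𝔼 → 𝔼} {x x' : 𝔼}
    {h : ℝ} :
    DGEq ftil itil ihat ibrev ibar x h x' ↔
      x' = x + h • dgDirection (fun u => ftil x u h) (fun u => itil x u h) (ibar x)
        (fun u => ihat x u h) (fun u => ibrev x u h) x' := by
  rw [DGEq, dgDirection, skewApply, smul_smul, div_eq_mul_inv]

end Euclidean

theorem discrete_gradient_exists_unique_general {d : ℕ}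
    (f : EuclideanSpace ℝ (Fin d) → EuclideanSpace ℝ (Fin d))
    (i : EuclideanSpace ℝ (Fin d) → EuclideanSpace ℝ (Fin d))
    (B : Set (EuclideanSpace ℝ (Fin d)))
    (C₁ : ℝ) (hC₁ : 0 < C₁) (hfC : ∀ x ∈ B, ‖f x‖ ≤ C₁ * ‖i x‖)
    (R L H : ℝ) (hR : 0 < R) (hL : 0 < L)
    (ftil itil ihat ibrev :
      EuclideanSpace ℝ (Fin d) → EuclideanSpace ℝ (Fin d) → ℝ → EuclideanSpace ℝ (Fin d))
    (ibar : EuclideanSpace ℝ (Fin d) → EuclideanSpace ℝ (Fin d) → EuclideanSpace ℝ (Fin d))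
    (hftil : ∀ x ∈ B, ConsistAt i f x R L H ftil)
    (hitil : ∀ x ∈ B, ConsistAt i i x R L H itil)
    (hihat : ∀ x ∈ B, ConsistAt i i x R L H ihat)
    (hibrev : ∀ x ∈ B, ConsistAt i i x R L H ibrev)
    (hibar_diag : ∀ x : EuclideanSpace ℝ (Fin d), ibar x x = i x)
    (hibar_lip : ∀ x ∈ B, ∀ u v w : EuclideanSpace ℝ (Fin d),
      InBall i R x u → InBall i R x v → InBall i R x w →
      ‖ibar u v - ibar w v‖ ≤ L * ‖u - w‖ ∧ ‖ibar u v - ibar u w‖ ≤ L * ‖v - w‖)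
    (R' H' : ℝ) (hR' : R' = max R (10 * L))
    (hH' : H' = min H (min (1 / (10 * L))
      (min (1 / (6 * (C₁ + 1/5) * R')) (1 / ((36 * (C₁ + 1/5) + 6) * L)))))
    :
    ∀ x ∈ B, ∀ h : ℝ, 0 ≤ h → h < H' →
      ∃! x' : EuclideanSpace ℝ (Fin d), InBall i R' x x' ∧
        ((i x ≠ 0 → DGEq ftil itil ihat ibrev ibar x h x') ∧ (i x = 0 → x' = x)) := by
  intro x hx h h0 hh
  by_cases hix : i x = 0
  · simp only [InBall, hix, norm_zero, zero_div, norm_le_zero_iff, sub_eq_zero]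
    exact ⟨x, ⟨rfl, fun hne => (hne rfl).elim, fun _ => rfl⟩, fun y hy => hy.1⟩
  subst hR' hH'
  simp only [lt_min_iff] at hh
  obtain ⟨hhH, hh10, hh6, hh36⟩ := hh
  set m := ‖i x‖ with hm_def
  have hm : 0 < m := norm_pos_iff.mpr hix
  have hR'0 : 0 < max R (10 * L) := lt_max_of_lt_left hR
  have hρR : m / max R (10 * L) ≤ m / R := div_le_div_of_nonneg_left hm.le hR (le_max_left _ _)
  have hρL := mul_div_max_le (R := R) hm.le hL
  have hF := (hftil x hx).approxOn hL h0 hhH hh10 hρR hρL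
  have hG := (hitil x hx).approxOn hL h0 hhH hh10 hρR hρL
  have hP := (hihat x hx).approxOn hL h0 hhH hh10 hρR hρL
  have hQ := (hibrev x hx).approxOn hL h0 hhH hh10 hρR hρL
  have hC : ApproxOn (closedBall x (m / max R (10 * L))) (ibar x) (i x) (m / 5) L :=
    approxOn_closedBall_of_inBall hL.le hρR
      (fun v w hv hw => (hibar_lip x hx x v w hv.self hv hw).2)
      (by rw [hibar_diag, sub_self, norm_zero]; linarith)
  have hMF : ‖f x‖ + m / 5 ≤ (C₁ + 1 / 5) * m := by linarith [hfC x hx]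
  have hM : m + m / 5 ≤ 6 / 5 * m := by linarith
  have hδ : 14 / 25 * m ^ 2 ≤ m ^ 2 - 2 * (m / 5) * m - (m / 5) ^ 2 := by linarith
  have hC₂ : 0 < C₁ + 1 / 5 := by linarith
  have := existsUnique_eq_add_smul (div_nonneg hm.le hR'0.le) h0
    (fun u hu => norm_dgDirection_le hF hG hC hP hQ hMF hM (by positivity) hδ hu)
    (fun u hu v hv => norm_dgDirection_sub_le hF hG hC hP hQ hMF hM (by positivity) hδ hu hv)
    (dgStep_bound_le hm hC₂ hR'0 hh6) (dgStep_lipschitz_lt_one hm hC₂ hL hh36)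
  simpa only [inBall_iff_mem_closedBall, dgEq_iff, ← hm_def, ne_eq, hix, not_false_eq_true,
    forall_const, IsEmpty.forall_iff, and_true] using this

/-- Theorem: existence and uniqueness for discrete gradient methods. -/
theorem discrete_gradient_exists_unique {d : ℕ}
    (f : EuclideanSpace ℝ (Fin d) → EuclideanSpace ℝ (Fin d))
    (I : EuclideanSpace ℝ (Fin d) → ℝ)
    (i : EuclideanSpace ℝ (Fin d) → EuclideanSpace ℝ (Fin d))
    (hgrad : ∀ x, HasGradientAt I (i x) x)
    (B : Set (EuclideanSpace ℝ (Fin d))) (hB : Bornology.IsBounded B)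
    (C₁ : ℝ) (hC₁ : 0 < C₁) (hfC : ∀ x ∈ B, ‖f x‖ ≤ C₁ * ‖i x‖)
    (R L H : ℝ) (hR : 0 < R) (hL : 0 < L) (hH : 0 < H)
    (ftil itil ihat ibrev :
      EuclideanSpace ℝ (Fin d) → EuclideanSpace ℝ (Fin d) → ℝ → EuclideanSpace ℝ (Fin d))
    (ibar : EuclideanSpace ℝ (Fin d) → EuclideanSpace ℝ (Fin d) → EuclideanSpace ℝ (Fin d))
    (hftil : ∀ x ∈ B, ConsistAt i f x R L H ftil)
    (hitil : ∀ x ∈ B, ConsistAt i i x R L H itil)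
    (hihat : ∀ x ∈ B, ConsistAt i i x R L H ihat)
    (hibrev : ∀ x ∈ B, ConsistAt i i x R L H ibrev)
    (hibar_cont : Continuous (fun q : EuclideanSpace ℝ (Fin d) × EuclideanSpace ℝ (Fin d) =>
      ibar q.1 q.2))
    (hibar_dg : ∀ x x' : EuclideanSpace ℝ (Fin d), ⟪ibar x x', x' - x⟫ = I x' - I x)
    (hibar_diag : ∀ x : EuclideanSpace ℝ (Fin d), ibar x x = i x)
    (hibar_lip : ∀ x ∈ B, ∀ u v w : EuclideanSpace ℝ (Fin d),
      InBall i R x u → InBall i R x v → InBall i R x w →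
      ‖ibar u v - ibar w v‖ ≤ L * ‖u - w‖ ∧ ‖ibar u v - ibar u w‖ ≤ L * ‖v - w‖)
    (R' H' : ℝ) (hR' : R' = max R (10 * L))
    (hH' : H' = min H (min (1 / (10 * L))
      (min (1 / (6 * (C₁ + 1/5) * R')) (1 / ((36 * (C₁ + 1/5) + 6) * L)))))
    :
    ∀ x ∈ B, ∀ h : ℝ, 0 ≤ h → h < H' →
      ∃! x' : EuclideanSpace ℝ (Fin d), InBall i R' x x' ∧
        ((i x ≠ 0 → DGEq ftil itil ihat ibrev ibar x h x') ∧ (i x = 0 → x' = x)) :=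
  discrete_gradient_exists_unique_general f i B C₁ hC₁ hfC R L H hR hL ftil itil ihat ibrev ibar
    hftil hitil hihat hibrev hibar_diag hibar_lip R' H' hR' hH'
end
end

section
/- Let B ⊂ ℝ^d be bounded, x ∈ B with i(x) ≠ 0, and let R, L, H be positive constants with R' := max{R, 10L}. Suppose î and ĭ each satisfy: î(x,x,0) = i(x), |î(u,v,h) − î(w,v,h)| ≤ L|u−w|, |î(u,v,h) − î(u,w,h)| ≤ L|v−w|, and |î(x,x,h) − î(x,x,0)| ≤ Lh|i(x)| for all u,v,w ∈ B_R(x) and h ∈ [0,H). Then for every z ∈ B_{R'}(x) and every h ∈ [0, min{H, 1/(10L)}), the inner product satisfies î(x,z,h) · ĭ(x,z,h) > (1/2)|i(x)|². -/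
/-!
Both `î(x,z,h)` and `ĭ(x,z,h)` lie within `|i(x)|/5` of `i(x)`: moving the second argument
from `z` to `x` costs at most `L|z - x| ≤ |i(x)|/10` (as `R' ≥ 10L`), and moving the step from
`h` to `0` costs at most `Lh|i(x)| ≤ |i(x)|/10` (as `h < 1/(10L)`). Two vectors within `ε` of `c`
have inner product at least `|c|² - 2ε|c| - ε²`, which for `ε = |c|/5` is `(14/25)|c|²`.
-/

open scoped RealInnerProductSpace

noncomputable section

theorem le_real_inner_of_norm_sub_le {E : Type*} [NormedAddCommGroup E] [InnerProductSpace ℝ E]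
    {a b c : E} {ε : ℝ} (ha : ‖a - c‖ ≤ ε) (hb : ‖b - c‖ ≤ ε) :
    ‖c‖ ^ 2 - 2 * ε * ‖c‖ - ε ^ 2 ≤ ⟪a, b⟫ := by
  have hexpand : ⟪a, b⟫ = ‖c‖ ^ 2 + ⟪c, b - c⟫ + ⟪a - c, c⟫ + ⟪a - c, b - c⟫ := by
    simp only [inner_sub_left, inner_sub_right, real_inner_self_eq_norm_sq, real_inner_comm c a]
    ring
  have h₁ := (abs_le.mp (abs_real_inner_le_norm c (b - c))).1
  have h₂ := (abs_le.mp (abs_real_inner_le_norm (a - c) c)).1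
  have h₃ := (abs_le.mp (abs_real_inner_le_norm (a - c) (b - c))).1
  have hc := norm_nonneg c
  nlinarith [norm_nonneg (a - c), norm_nonneg (b - c)]

section InBall

variable {d : ℕ} {i : EuclideanSpace ℝ (Fin d) → EuclideanSpace ℝ (Fin d)} {R R' : ℝ}
  {x z : EuclideanSpace ℝ (Fin d)}

theorem inBall_self (hR : 0 ≤ R) : InBall i R x x := by
  rw [InBall, sub_self, norm_zero]
  positivity

theorem InBall.of_le (hR : 0 < R) (hRR' : R ≤ R') (hz : InBall i R' x z) : InBall i R x z :=
  hz.trans (by gcongr)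

end InBall

namespace ConsistAt

variable {d : ℕ} {i target : EuclideanSpace ℝ (Fin d) → EuclideanSpace ℝ (Fin d)}
  {x z : EuclideanSpace ℝ (Fin d)} {R L H h : ℝ}
  {g : EuclideanSpace ℝ (Fin d) → EuclideanSpace ℝ (Fin d) → ℝ → EuclideanSpace ℝ (Fin d)}

theorem norm_sub_target_le (hg : ConsistAt i target x R L H g) (hR : 0 ≤ R)
    (hz : InBall i R x z) (hh₀ : 0 ≤ h) (hhH : h < H) :
    ‖g x z h - target x‖ ≤ L * ‖z - x‖ + L * h * ‖i x‖ := by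
  obtain ⟨hg₀, hgh⟩ := hg
  obtain ⟨hlip, hstep⟩ := hgh h hh₀ hhH
  have hmove : ‖g x z h - g x x h‖ ≤ L * ‖z - x‖ :=
    (hlip x z x (inBall_self hR) hz (inBall_self hR)).2
  rw [hg₀] at hstep
  calc ‖g x z h - target x‖ ≤ ‖g x z h - g x x h‖ + ‖g x x h - target x‖ :=
        norm_sub_le_norm_sub_add_norm_sub _ _ _
    _ ≤ L * ‖z - x‖ + L * h * ‖i x‖ := add_le_add hmove hstep

theorem norm_sub_target_le_fifth (hg : ConsistAt i target x R L H g) (hR : 0 < R) (hL : 0 < L)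
    (hz : InBall i (max R (10 * L)) x z) (hh₀ : 0 ≤ h) (hh : h < min H (1 / (10 * L))) :
    ‖g x z h - target x‖ ≤ ‖i x‖ / 5 := by
  have hzx : L * ‖z - x‖ ≤ ‖i x‖ / 10 := by
    have := (hz.of_le (by positivity) (le_max_right R _) : InBall i (10 * L) x z)
    rw [InBall, le_div_iff₀ (by positivity)] at this
    linarith
  have hLh : L * h ≤ 1 / 10 := by
    have := (lt_min_iff.mp hh).2
    rw [lt_div_iff₀ (by positivity)] at this
    linarith
  have hstep : L * h * ‖i x‖ ≤ ‖i x‖ / 10 := by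
    nlinarith [norm_nonneg (i x)]
  have := hg.norm_sub_target_le hR.le (hz.of_le hR (le_max_left R _)) hh₀ (lt_min_iff.mp hh).1
  linarith

end ConsistAt

theorem discrete_gradient_denominator_lower_bound_general {d : ℕ}
    (i : EuclideanSpace ℝ (Fin d) → EuclideanSpace ℝ (Fin d))
    (x : EuclideanSpace ℝ (Fin d)) (hix : i x ≠ 0)
    (R L H : ℝ) (hR : 0 < R) (hL : 0 < L)
    (R' : ℝ) (hR' : R' = max R (10 * L))
    (ihat ibrev :
      EuclideanSpace ℝ (Fin d) → EuclideanSpace ℝ (Fin d) → ℝ → EuclideanSpace ℝ (Fin d))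
    (hihat : ConsistAt i i x R L H ihat)
    (hibrev : ConsistAt i i x R L H ibrev) :
    ∀ z : EuclideanSpace ℝ (Fin d), InBall i R' x z →
      ∀ h : ℝ, 0 ≤ h → h < min H (1 / (10 * L)) →
        (1/2) * ‖i x‖ ^ 2 < ⟪ihat x z h, ibrev x z h⟫ := by
  intro z hz h hh₀ hh
  subst hR'
  have hinner := le_real_inner_of_norm_sub_le
    (hihat.norm_sub_target_le_fifth hR hL hz hh₀ hh)
    (hibrev.norm_sub_target_le_fifth hR hL hz hh₀ hh)
  have hpos : 0 < ‖i x‖ := norm_pos_iff.mpr hix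
  nlinarith

/-- The denominator bound `î(x,z,h)·ĭ(x,z,h) > (1/2)|i(x)|²`. -/
theorem discrete_gradient_denominator_lower_bound {d : ℕ}
    (I : EuclideanSpace ℝ (Fin d) → ℝ)
    (i : EuclideanSpace ℝ (Fin d) → EuclideanSpace ℝ (Fin d))
    (hgrad : ∀ x, HasGradientAt I (i x) x)
    (B : Set (EuclideanSpace ℝ (Fin d))) (hB : Bornology.IsBounded B)
    (x : EuclideanSpace ℝ (Fin d)) (hxB : x ∈ B) (hix : i x ≠ 0)
    (R L H : ℝ) (hR : 0 < R) (hL : 0 < L) (hH : 0 < H)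
    (R' : ℝ) (hR' : R' = max R (10 * L))
    (ihat ibrev :
      EuclideanSpace ℝ (Fin d) → EuclideanSpace ℝ (Fin d) → ℝ → EuclideanSpace ℝ (Fin d))
    (hihat : ConsistAt i i x R L H ihat)
    (hibrev : ConsistAt i i x R L H ibrev) :
    ∀ z : EuclideanSpace ℝ (Fin d), InBall i R' x z →
      ∀ h : ℝ, 0 ≤ h → h < min H (1 / (10 * L)) →
        (1/2) * ‖i x‖ ^ 2 < ⟪ihat x z h, ibrev x z h⟫ :=
  discrete_gradient_denominator_lower_bound_general i x hix R L H hR hL R' hR' ihat ibrev hihat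
    hibrev
end
end

section
/- Let B ⊂ ℝ^d be bounded and R₀ > 0, let L₀ satisfy |f(u) − f(v)| ≤ L₀|u−v| and |i(u) − i(v)| ≤ L₀|u−v| for all x ∈ B and u, v ∈ B_{R₀}(x), and let C₁ satisfy |f(x)| ≤ C₁|i(x)| on B. Let (aᵢⱼ)_{i,j=1}^s be the coefficients of an s-stage Runge–Kutta method with A₁ := maxᵢ Σⱼ|aᵢⱼ|, and define H := min{1/(L₀A₁), 1/(2A₁(C₁ + L₀/R₀)R₀), 1/(2L₀A₁(C₁ + L₀/R₀)R₀)}. Then for each x ∈ B, h ∈ [0,H) and u ∈ B_{2R₀}(x) there exist unique vectors k₁, …, k_s ∈ ℝ^d with |kᵢ − f(x)| ≤ L₀|i(x)|/R₀ for each i, satisfying kᵢ = f(u + h Σ_{j=1}^s aᵢⱼ kⱼ) for i = 1, …, s. -/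
/-!
With the sup norm on stage tuples, the stage map `k ↦ (f (u + h ∑ⱼ aᵢⱼ kⱼ))ᵢ` is
`h L₀ A₁`-Lipschitz as long as all its evaluation points stay in `B_{R₀}(x)`, where `f` is
`L₀`-Lipschitz. For stages within `L₀ |i(x)| / R₀` of `f(x)` we have `|kⱼ| ≤ (C₁ + L₀/R₀) |i(x)|`,
so the step-size bound `h < H` keeps `u + h ∑ⱼ aᵢⱼ kⱼ` within `|i(x)| / (2R₀)` of `u`, hence inside
`B_{R₀}(x)`. The stage map is therefore a contraction of that closed ball of stage tuples into
itself, and Banach's fixed point theorem gives existence and uniqueness.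
-/

open scoped RealInnerProductSpace

noncomputable section

open Metric Set Finset

theorem Set.MapsTo.existsUnique_fixedPoint_of_lipschitzOnWith {X : Type*} [MetricSpace X]
    {s : Set X} {Φ : X → X} (hΦ : MapsTo Φ s s) (hs : IsComplete s) (hne : s.Nonempty)
    {q : NNReal} (hq : q < 1) (hlip : LipschitzOnWith q Φ s) :
    ∃! x, x ∈ s ∧ Φ x = x := by
  have := hs.completeSpace_coe
  have := hne.to_subtype
  have hc : ContractingWith q (hΦ.restrict Φ s s) := ⟨hq, hlip.mapsToRestrict hΦ⟩
  refine ⟨hc.fixedPoint, ⟨Subtype.prop _, congrArg Subtype.val hc.fixedPoint_isFixedPt⟩, ?_⟩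
  rintro y ⟨hy, hfix⟩
  exact congrArg Subtype.val (hc.fixedPoint_unique (x := ⟨y, hy⟩) (Subtype.ext hfix))

theorem norm_sum_smul_le_sum_abs_mul_norm {ι E : Type*} [Fintype ι] [SeminormedAddCommGroup E]
    [NormedSpace ℝ E] (c : ι → ℝ) (v : ι → E) :
    ‖∑ j, c j • v j‖ ≤ (∑ j, |c j|) * ‖v‖ := by
  calc ‖∑ j, c j • v j‖ ≤ ∑ j, |c j| * ‖v j‖ := by
        simpa only [norm_smul, Real.norm_eq_abs] using norm_sum_le univ fun j => c j • v j
    _ ≤ ∑ j, |c j| * ‖v‖ := by gcongr with j; exact norm_le_pi_norm v j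
    _ = (∑ j, |c j|) * ‖v‖ := (sum_mul _ _ _).symm

namespace RungeKutta

variable {ι E : Type*} [Fintype ι] [NormedAddCommGroup E] [NormedSpace ℝ E]

def stageArg (a : ι → ι → ℝ) (u : E) (h : ℝ) (k : ι → E) (i : ι) : E :=
  u + h • ∑ j, a i j • k j

def stageMap (f : E → E) (a : ι → ι → ℝ) (u : E) (h : ℝ) (k : ι → E) : ι → E :=
  fun i => f (stageArg a u h k i)

variable {a : ι → ι → ℝ} {A : NNReal} {h : ℝ}

theorem norm_smul_sum_smul_le (hA : ∀ i, ∑ j, |a i j| ≤ A) (hh : 0 ≤ h) (k : ι → E) (i : ι) :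
    ‖h • ∑ j, a i j • k j‖ ≤ h * A * ‖k‖ := by
  rw [norm_smul, Real.norm_of_nonneg hh, mul_assoc]
  gcongr
  exact (norm_sum_smul_le_sum_abs_mul_norm _ _).trans (by gcongr; exact hA i)

theorem norm_stageArg_sub_le (hA : ∀ i, ∑ j, |a i j| ≤ A) (hh : 0 ≤ h) (u : E) (k : ι → E)
    (i : ι) : ‖stageArg a u h k i - u‖ ≤ h * A * ‖k‖ := by
  rw [stageArg, add_sub_cancel_left]
  exact norm_smul_sum_smul_le hA hh k i

theorem norm_stageArg_sub_stageArg_le (hA : ∀ i, ∑ j, |a i j| ≤ A) (hh : 0 ≤ h) (u : E)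
    (k k' : ι → E) (i : ι) :
    ‖stageArg a u h k i - stageArg a u h k' i‖ ≤ h * A * ‖k - k'‖ := by
  have hdiff : stageArg a u h k i - stageArg a u h k' i = h • ∑ j, a i j • (k - k') j := by
    simp only [stageArg, Pi.sub_apply, smul_sub, sum_sub_distrib, add_sub_add_left_eq_sub]
  rw [hdiff]
  exact norm_smul_sum_smul_le hA hh (k - k') i

theorem existsUnique_stages [CompleteSpace E] {f : E → E} {x u : E} {ρ : ℝ} {L : NNReal}
    (hf : LipschitzOnWith L f (closedBall x ρ)) (hA : ∀ i, ∑ j, |a i j| ≤ A) (hh : 0 ≤ h)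
    (hcontr : h * L * A < 1) (hu : ‖u - x‖ ≤ ρ / 2)
    (hdrift : h * A * (‖f x‖ + L * ρ) ≤ ρ / 2) :
    ∃! k : ι → E, (∀ i, ‖k i - f x‖ ≤ L * ρ) ∧ ∀ i, k i = f (u + h • ∑ j, a i j • k j) := by
  have hρ : 0 ≤ ρ := by linarith [norm_nonneg (u - x)]
  have hr : (0 : ℝ) ≤ L * ρ := by positivity
  set K : Set (ι → E) := closedBall (fun _ => f x) (L * ρ)
  have hmemK : ∀ k, k ∈ K ↔ ∀ i, ‖k i - f x‖ ≤ L * ρ := fun k => by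
    rw [mem_closedBall, dist_eq_norm, pi_norm_le_iff_of_nonneg hr]
    rfl
  have hstage : ∀ k ∈ K, ∀ i, stageArg a u h k i ∈ closedBall x ρ := by
    intro k hk i
    have hk_norm : ‖k‖ ≤ ‖f x‖ + L * ρ :=
      calc ‖k‖ ≤ ‖(fun _ => f x : ι → E)‖ + ‖k - fun _ => f x‖ := norm_le_insert' _ _
        _ ≤ ‖f x‖ + L * ρ := add_le_add (pi_norm_const_le _) (mem_closedBall_iff_norm.mp hk)
    rw [mem_closedBall_iff_norm]
    calc ‖stageArg a u h k i - x‖ ≤ ‖stageArg a u h k i - u‖ + ‖u - x‖ :=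
          norm_sub_le_norm_sub_add_norm_sub _ _ _
      _ ≤ h * A * (‖f x‖ + L * ρ) + ρ / 2 := by
          gcongr
          exact (norm_stageArg_sub_le hA hh u k i).trans (by gcongr)
      _ ≤ ρ := by linarith
  have hmaps : MapsTo (stageMap f a u h) K K := fun k hk => (hmemK _).mpr fun i =>
    calc ‖f (stageArg a u h k i) - f x‖ ≤ L * dist (stageArg a u h k i) x := by
          rw [← dist_eq_norm]
          exact hf.dist_le_mul _ (hstage k hk i) _ (mem_closedBall_self hρ)
      _ ≤ L * ρ := by gcongr; exact mem_closedBall.mp (hstage k hk i)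
  let q : NNReal := ⟨h * L * A, mul_nonneg (mul_nonneg hh L.2) A.2⟩
  have hlip : LipschitzOnWith q (stageMap f a u h) K := by
    refine .of_dist_le_mul fun k hk k' hk' => (dist_pi_le_iff (by positivity)).mpr fun i => ?_
    calc dist (f (stageArg a u h k i)) (f (stageArg a u h k' i))
        ≤ L * dist (stageArg a u h k i) (stageArg a u h k' i) :=
          hf.dist_le_mul _ (hstage k hk i) _ (hstage k' hk' i)
      _ ≤ L * (h * A * dist k k') := by
          rw [dist_eq_norm, dist_eq_norm]
          gcongr
          exact norm_stageArg_sub_stageArg_le hA hh u k k' i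
      _ = q * dist k k' := by rw [show (q : ℝ) = h * L * A from rfl]; ring
  obtain ⟨k, ⟨hk, hfix⟩, huniq⟩ := hmaps.existsUnique_fixedPoint_of_lipschitzOnWith
    isClosed_closedBall.isComplete ⟨_, mem_closedBall_self hr⟩
    (NNReal.coe_lt_one.mp (show (q : ℝ) < 1 from hcontr)) hlip
  have hfix_iff (k : ι → E) :
      stageMap f a u h k = k ↔ ∀ i, k i = f (u + h • ∑ j, a i j • k j) := by
    rw [funext_iff]
    exact forall_congr' fun i => eq_comm
  refine ⟨k, ⟨(hmemK k).mp hk, (hfix_iff k).mp hfix⟩, fun k' ⟨hk', hfix'⟩ => ?_⟩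
  exact huniq k' ⟨(hmemK k').mpr hk', (hfix_iff k').mpr hfix'⟩

end RungeKutta

theorem mul_mul_add_le_half_of_lt_one_div {h A C L R n F : ℝ} (hh : 0 ≤ h) (hA : 0 < A)
    (hR : 0 < R) (hL : 0 < L) (hC : 0 < C) (hn : 0 ≤ n) (hF : F ≤ C * n)
    (hstep : h < 1 / (2 * A * (C + L / R) * R)) :
    h * A * (F + L * (n / R)) ≤ n / R / 2 := by
  have hstep' : h * (2 * A * (C + L / R) * R) ≤ 1 := by
    rw [← le_div_iff₀ (by positivity)]
    exact hstep.le
  calc h * A * (F + L * (n / R)) ≤ h * A * ((C + L / R) * n) := by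
        gcongr
        linarith [show (C + L / R) * n = C * n + L * (n / R) by ring]
    _ = h * (2 * A * (C + L / R) * R) * (n / R / 2) := by field_simp
    _ ≤ n / R / 2 := mul_le_of_le_one_left (by positivity) hstep'

theorem runge_kutta_stages_exist_unique_general {d s : ℕ}
    (f : EuclideanSpace ℝ (Fin d) → EuclideanSpace ℝ (Fin d))
    (i : EuclideanSpace ℝ (Fin d) → EuclideanSpace ℝ (Fin d))
    (B : Set (EuclideanSpace ℝ (Fin d)))
    (R₀ L₀ C₁ : ℝ) (hR₀ : 0 < R₀) (hL₀ : 0 < L₀) (hC₁ : 0 < C₁)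
    (hflip : ∀ x ∈ B, ∀ u v : EuclideanSpace ℝ (Fin d),
      InBall i R₀ x u → InBall i R₀ x v → ‖f u - f v‖ ≤ L₀ * ‖u - v‖)
    (hfC : ∀ x ∈ B, ‖f x‖ ≤ C₁ * ‖i x‖)
    (a : Fin s → Fin s → ℝ)
    (A₁ : ℝ) (hA₁ : A₁ = ⨆ idx : Fin s, ∑ j : Fin s, |a idx j|)
    (H : ℝ) (hH : H = min (1 / (L₀ * A₁))
      (min (1 / (2 * A₁ * (C₁ + L₀ / R₀) * R₀)) (1 / (2 * L₀ * A₁ * (C₁ + L₀ / R₀) * R₀)))) :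
    ∀ x ∈ B, ∀ h : ℝ, 0 ≤ h → h < H →
      ∀ u : EuclideanSpace ℝ (Fin d), InBall i (2 * R₀) x u →
        ∃! k : Fin s → EuclideanSpace ℝ (Fin d),
          (∀ idx : Fin s, ‖k idx - f x‖ ≤ L₀ * ‖i x‖ / R₀) ∧
          ∀ idx : Fin s, k idx = f (u + h • ∑ j : Fin s, a idx j • k j) := by
  intro x hx h hh hhH u hu
  have hrow : ∀ idx, ∑ j, |a idx j| ≤ A₁ := fun idx => by
    rw [hA₁]
    exact le_ciSup (Set.finite_range fun idx => ∑ j, |a idx j|).bddAbove idx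
  have hH₁ : h < 1 / (L₀ * A₁) := hhH.trans_le (hH ▸ min_le_left _ _)
  have hH₂ : h < 1 / (2 * A₁ * (C₁ + L₀ / R₀) * R₀) :=
    hhH.trans_le (hH ▸ (min_le_right _ _).trans (min_le_left _ _))
  -- `0 ≤ h < 1 / (L₀ * A₁)` rules out `A₁ = 0`, where the division would be `1 / 0 = 0`.
  have hA₁pos : 0 < A₁ := pos_of_mul_pos_right (one_div_pos.mp (hh.trans_lt hH₁)) hL₀.le
  have hcontr : h * L₀ * A₁ < 1 := by
    rw [mul_assoc, ← lt_div_iff₀ (by positivity)]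
    exact hH₁
  have hdrift : h * A₁ * (‖f x‖ + L₀ * (‖i x‖ / R₀)) ≤ ‖i x‖ / R₀ / 2 :=
    mul_mul_add_le_half_of_lt_one_div hh hA₁pos hR₀ hL₀ hC₁ (norm_nonneg _) (hfC x hx) hH₂
  have hu' : ‖u - x‖ ≤ ‖i x‖ / R₀ / 2 := hu.trans_eq (by rw [div_div, mul_comm])
  lift L₀ to NNReal using hL₀.le
  lift A₁ to NNReal using hA₁pos.le
  have hlip : LipschitzOnWith L₀ f (closedBall x (‖i x‖ / R₀)) :=
    .of_dist_le_mul fun v hv w hw => by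
      simpa only [dist_eq_norm] using
        hflip x hx v w (mem_closedBall_iff_norm.mp hv) (mem_closedBall_iff_norm.mp hw)
  simpa only [mul_div_assoc] using RungeKutta.existsUnique_stages hlip hrow hh hcontr hu' hdrift

/-- Lemma: existence and uniqueness of Runge–Kutta stages. -/
theorem runge_kutta_stages_exist_unique {d s : ℕ}
    (f : EuclideanSpace ℝ (Fin d) → EuclideanSpace ℝ (Fin d))
    (I : EuclideanSpace ℝ (Fin d) → ℝ)
    (i : EuclideanSpace ℝ (Fin d) → EuclideanSpace ℝ (Fin d))
    (hgrad : ∀ x, HasGradientAt I (i x) x)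
    (B : Set (EuclideanSpace ℝ (Fin d))) (hB : Bornology.IsBounded B)
    (R₀ L₀ C₁ : ℝ) (hR₀ : 0 < R₀) (hL₀ : 0 < L₀) (hC₁ : 0 < C₁)
    (hflip : ∀ x ∈ B, ∀ u v : EuclideanSpace ℝ (Fin d),
      InBall i R₀ x u → InBall i R₀ x v → ‖f u - f v‖ ≤ L₀ * ‖u - v‖)
    (hilip : ∀ x ∈ B, ∀ u v : EuclideanSpace ℝ (Fin d),
      InBall i R₀ x u → InBall i R₀ x v → ‖i u - i v‖ ≤ L₀ * ‖u - v‖)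
    (hfC : ∀ x ∈ B, ‖f x‖ ≤ C₁ * ‖i x‖)
    (a : Fin s → Fin s → ℝ)
    (A₁ : ℝ) (hA₁ : A₁ = ⨆ idx : Fin s, ∑ j : Fin s, |a idx j|)
    (H : ℝ) (hH : H = min (1 / (L₀ * A₁))
      (min (1 / (2 * A₁ * (C₁ + L₀ / R₀) * R₀)) (1 / (2 * L₀ * A₁ * (C₁ + L₀ / R₀) * R₀)))) :
    ∀ x ∈ B, ∀ h : ℝ, 0 ≤ h → h < H →
      ∀ u : EuclideanSpace ℝ (Fin d), InBall i (2 * R₀) x u →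
        ∃! k : Fin s → EuclideanSpace ℝ (Fin d),
          (∀ idx : Fin s, ‖k idx - f x‖ ≤ L₀ * ‖i x‖ / R₀) ∧
          ∀ idx : Fin s, k idx = f (u + h • ∑ j : Fin s, a idx j • k j) :=
  runge_kutta_stages_exist_unique_general f i B R₀ L₀ C₁ hR₀ hL₀ hC₁ hflip hfC a A₁ hA₁ H hH
end
end

section
/- Let B ⊂ ℝ^d be compact and suppose R, L, H, f̃, ĩ, ī satisfy the consistency/Lipschitz conditions of the existence theorem for discrete gradient methods on B. Define î ≡ ĩ, and ĭ(x,h) := ī(x,y) where y solves y = x + h f̃(x,y,h); let R₁, L₁, H₁ be as in the lemma giving the Lipschitz properties of ĭ, and R₁' := max{R₁, 10L₁}, H₁' := min{H₁, 1/(10L₁), 1/(6C₂R₁'), 1/((36C₂+6)L₁)}. For each x ∈ B and h ∈ [0,H₁'), let y ∈ B_{6R₁'}(x) be the unique solution of y = x + h f̃(x,y,h), let x' ∈ B_{R₁'}(x) be the unique discrete gradient solution, and let x(·) be the exact solution with x(t) = x. Suppose there exist C₃ > 0 and H₃ < H₁' with |y − x(t+h)| ≤ C₃h^{p+1} for all h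 ∈ [0,H₃] and all x ∈ B. Then with C₄ := (6L₁/5)·max{1, C₃}, for each x ∈ B and h ∈ [0,H₃]: |î(x,x',h)·ĭ(x,h) − ĩ(x,x',h)·ī(x,x')| ≤ C₄(|x' − x(t+h)| + h^{p+1})|i(x)|. -/
open scoped RealInnerProductSpace

noncomputable section

set_option maxHeartbeats 2000000 in
/-- Lemma: with `î ≡ ĩ` and `ĭ(x,h) := ī(x,y)`, condition (30z1) holds with
`C₄ := (6L₁/5)·max{1, C₃}`. -/
theorem almost_projection_denominator_condition {d : ℕ}
    (f : EuclideanSpace ℝ (Fin d) → EuclideanSpace ℝ (Fin d))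
    (I : EuclideanSpace ℝ (Fin d) → ℝ)
    (i : EuclideanSpace ℝ (Fin d) → EuclideanSpace ℝ (Fin d))
    (hgrad : ∀ x, HasGradientAt I (i x) x)
    (B : Set (EuclideanSpace ℝ (Fin d))) (hBc : IsCompact B)
    (C₁ : ℝ) (hC₁ : 0 < C₁) (hfC : ∀ x ∈ B, ‖f x‖ ≤ C₁ * ‖i x‖)
    (R L H : ℝ) (hR : 0 < R) (hL : 0 < L) (hH : 0 < H)
    (ftil itil : EuclideanSpace ℝ (Fin d) → EuclideanSpace ℝ (Fin d) → ℝ →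
      EuclideanSpace ℝ (Fin d))
    (hftil : ∀ x ∈ B, ConsistAt i f x R L H ftil)
    (hitil : ∀ x ∈ B, ConsistAt i i x R L H itil)
    (ibar : EuclideanSpace ℝ (Fin d) → EuclideanSpace ℝ (Fin d) → EuclideanSpace ℝ (Fin d))
    (hibar_cont : Continuous (fun q : EuclideanSpace ℝ (Fin d) × EuclideanSpace ℝ (Fin d) =>
      ibar q.1 q.2))
    (hibar_dg : ∀ x x' : EuclideanSpace ℝ (Fin d), ⟪ibar x x', x' - x⟫ = I x' - I x)
    (hibar_diag : ∀ x : EuclideanSpace ℝ (Fin d), ibar x x = i x)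
    (hibar_lip : ∀ x ∈ B, ∀ u v w : EuclideanSpace ℝ (Fin d),
      InBall i R x u → InBall i R x v → InBall i R x w →
      ‖ibar u v - ibar w v‖ ≤ L * ‖u - w‖ ∧ ‖ibar u v - ibar u w‖ ≤ L * ‖v - w‖)
    (R₁ L₁ H₁ R₁' H₁' : ℝ) (hR₁ : R₁ = 2 * R)
    (hL₁ : L₁ = max (2 * L) (L * (C₁ + L / R)))
    (hH₁ : H₁ = min H (min (1 / (2 * R)) (min (1 / (L * (C₁ + L / R))) (1 / (2 * L)))))
    (hR₁' : R₁' = max R₁ (10 * L₁))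
    (hH₁' : H₁' = min H₁ (min (1 / (10 * L₁))
      (min (1 / (6 * (C₁ + 1/5) * R₁')) (1 / ((36 * (C₁ + 1/5) + 6) * L₁)))))
    (sol : EuclideanSpace ℝ (Fin d) → ℝ → EuclideanSpace ℝ (Fin d))
    (hsol0 : ∀ x, sol x 0 = x)
    (hsol : ∀ x ∈ B, ∀ s : ℝ, 0 ≤ s → s ≤ H₁' → HasDerivAt (sol x) (f (sol x s)) s)
    (p : ℕ) (C₃ H₃ : ℝ) (hC₃ : 0 < C₃) (hH₃0 : 0 < H₃) (hH₃ : H₃ < H₁')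
    (horder : ∀ x ∈ B, ∀ h : ℝ, 0 ≤ h → h ≤ H₃ →
      ∀ y : EuclideanSpace ℝ (Fin d), InBall i (6 * R₁') x y → y = x + h • ftil x y h →
        ‖y - sol x h‖ ≤ C₃ * h ^ (p + 1))
    (C₄ : ℝ) (hC₄ : C₄ = (6 * L₁ / 5) * max 1 C₃) :
    ∀ x ∈ B, ∀ h : ℝ, 0 ≤ h → h ≤ H₃ →
      ∀ y : EuclideanSpace ℝ (Fin d), InBall i (6 * R₁') x y → y = x + h • ftil x y h →
        ∀ x' : EuclideanSpace ℝ (Fin d), InBall i R₁' x x' →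
          ((i x ≠ 0 →
              x' = x + (h / ⟪itil x x' h, ibar x y⟫) •
                (⟪itil x x' h, ibar x x'⟫ • ftil x x' h -
                  ⟪ftil x x' h, ibar x x'⟫ • itil x x' h)) ∧
            (i x = 0 → x' = x)) →
          |⟪itil x x' h, ibar x y⟫ - ⟪itil x x' h, ibar x x'⟫| ≤
            C₄ * (‖x' - sol x h‖ + h ^ (p + 1)) * ‖i x‖ := by
  intro x hx h h0 hhH₃ y hyball hyeq x' hx'ball _
  have hix : (0:ℝ) ≤ ‖i x‖ := norm_nonneg _
  have hLC : 0 < L * (C₁ + L / R) := by positivity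
  have hL₁2L : 2 * L ≤ L₁ := hL₁ ▸ le_max_left _ _
  have hL₁pos : 0 < L₁ := by linarith
  have hR₁'10 : 10 * L₁ ≤ R₁' := hR₁' ▸ le_max_right _ _
  have hR₁'R₁ : R₁ ≤ R₁' := hR₁' ▸ le_max_left _ _
  have hR₁'pos : 0 < R₁' := by linarith
  have hRR₁' : R ≤ R₁' := by rw [hR₁] at hR₁'R₁; linarith
  have hH₁'H₁ : H₁' ≤ H₁ := hH₁' ▸ min_le_left _ _
  have hH₁H : H₁ ≤ H := hH₁ ▸ min_le_left _ _
  have hhH : h < H := by linarith [lt_of_le_of_lt hhH₃ hH₃]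
  have hH₁'inv : H₁' ≤ 1 / (10 * L₁) := by
    rw [hH₁']; exact le_trans (min_le_right _ _) (min_le_left _ _)
  have hhL₁ : h * (10 * L₁) ≤ 1 := by
    have h1 : h ≤ 1 / (10 * L₁) := by linarith
    rw [le_div_iff₀ (by positivity)] at h1; exact h1
  have hxball : InBall i R x x := by
    unfold InBall; simp only [sub_self, norm_zero]; positivity
  have hyR : InBall i R x y := le_trans hyball (by gcongr <;> linarith)
  have hx'R : InBall i R x x' := le_trans hx'ball (by gcongr)
  -- bound on ‖itil x x' h‖
  obtain ⟨hit0, hitH⟩ := hitil x hx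
  obtain ⟨hitLip, hitCons⟩ := hitH h h0 hhH
  have hb1 : ‖itil x x' h - itil x x h‖ ≤ L * ‖x' - x‖ :=
    (hitLip x x' x hxball hx'R hxball).2
  have hx'b : ‖x' - x‖ * R₁' ≤ ‖i x‖ := (le_div_iff₀ hR₁'pos).mp hx'ball
  have hb1' : L * ‖x' - x‖ ≤ (1/20) * ‖i x‖ := by
    nlinarith [mul_le_mul_of_nonneg_right (show 20 * L ≤ R₁' by linarith)
      (norm_nonneg (x' - x))]
  have hb2' : L * h * ‖i x‖ ≤ (1/20) * ‖i x‖ := by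
    have h1 : L * h ≤ 1/20 := by
      nlinarith [mul_le_mul_of_nonneg_right hL₁2L h0]
    have h2 := mul_le_mul_of_nonneg_right h1 hix
    linarith
  have hitnorm : ‖itil x x' h‖ ≤ (11/10) * ‖i x‖ := by
    have hsplit : itil x x' h =
        (itil x x' h - itil x x h) + (itil x x h - itil x x 0) + itil x x 0 := by abel
    calc ‖itil x x' h‖
        ≤ ‖itil x x' h - itil x x h‖ + ‖itil x x h - itil x x 0‖ + ‖itil x x 0‖ := by
          nth_rewrite 1 [hsplit]; exact norm_add₃_le
      _ ≤ (1/20) * ‖i x‖ + (1/20) * ‖i x‖ + ‖i x‖ := by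
          have e3 : ‖itil x x 0‖ = ‖i x‖ := by rw [hit0]
          linarith [le_trans hb1 hb1', le_trans hitCons hb2']
      _ = (11/10) * ‖i x‖ := by ring
  -- Lipschitz bound for ibar in second argument
  have hibarLip : ‖ibar x y - ibar x x'‖ ≤ L * ‖y - x'‖ :=
    (hibar_lip x hx x y x' hxball hyR hx'R).2
  -- order bound
  have hyord : ‖y - sol x h‖ ≤ C₃ * h ^ (p + 1) := horder x hx h h0 hhH₃ y hyball hyeq
  have hyx' : ‖y - x'‖ ≤ C₃ * h ^ (p + 1) + ‖x' - sol x h‖ := by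
    calc ‖y - x'‖ = ‖(y - sol x h) + (sol x h - x')‖ := by rw [sub_add_sub_cancel]
      _ ≤ ‖y - sol x h‖ + ‖sol x h - x'‖ := norm_add_le _ _
      _ ≤ C₃ * h ^ (p + 1) + ‖x' - sol x h‖ := by
          rw [norm_sub_rev (sol x h)]; gcongr
  have key : |⟪itil x x' h, ibar x y⟫ - ⟪itil x x' h, ibar x x'⟫| ≤
      ‖itil x x' h‖ * ‖ibar x y - ibar x x'‖ := by
    rw [← inner_sub_right]; exact abs_real_inner_le_norm _ _
  have hD : (0:ℝ) ≤ ‖x' - sol x h‖ := norm_nonneg _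
  have hHp : (0:ℝ) ≤ h ^ (p + 1) := pow_nonneg h0 _
  have hM1 : (1:ℝ) ≤ max 1 C₃ := le_max_left _ _
  have hMC : C₃ ≤ max 1 C₃ := le_max_right _ _
  calc |⟪itil x x' h, ibar x y⟫ - ⟪itil x x' h, ibar x x'⟫|
      ≤ ‖itil x x' h‖ * ‖ibar x y - ibar x x'‖ := key
    _ ≤ ((11/10) * ‖i x‖) * (L * ‖y - x'‖) :=
        mul_le_mul hitnorm hibarLip (norm_nonneg _) (by positivity)
    _ ≤ ((11/10) * ‖i x‖) * (L * (C₃ * h ^ (p + 1) + ‖x' - sol x h‖)) :=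
        mul_le_mul_of_nonneg_left (mul_le_mul_of_nonneg_left hyx' hL.le) (by positivity)
    _ ≤ ((11/10) * ‖i x‖) *
          ((L₁ / 2) * (max 1 C₃ * (h ^ (p + 1) + ‖x' - sol x h‖))) := by
        have hX : C₃ * h ^ (p + 1) + ‖x' - sol x h‖ ≤
            max 1 C₃ * (h ^ (p + 1) + ‖x' - sol x h‖) := by
          have t1 : C₃ * h ^ (p + 1) ≤ max 1 C₃ * h ^ (p + 1) :=
            mul_le_mul_of_nonneg_right hMC hHp
          have t2 : 1 * ‖x' - sol x h‖ ≤ max 1 C₃ * ‖x' - sol x h‖ :=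
            mul_le_mul_of_nonneg_right hM1 hD
          linarith [mul_add (max 1 C₃) (h ^ (p + 1)) ‖x' - sol x h‖]
        have hXnn : (0:ℝ) ≤ C₃ * h ^ (p + 1) + ‖x' - sol x h‖ := by positivity
        exact mul_le_mul_of_nonneg_left
          (mul_le_mul (by linarith) hX hXnn (by linarith)) (by positivity)
    _ = (11/20) * (L₁ * (max 1 C₃ * ((h ^ (p + 1) + ‖x' - sol x h‖) * ‖i x‖))) := by ring
    _ ≤ (6/5) * (L₁ * (max 1 C₃ * ((h ^ (p + 1) + ‖x' - sol x h‖) * ‖i x‖))) := by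
        have q : (0:ℝ) ≤ L₁ * (max 1 C₃ * ((h ^ (p + 1) + ‖x' - sol x h‖) * ‖i x‖)) :=
          mul_nonneg hL₁pos.le (mul_nonneg (by linarith)
            (mul_nonneg (by linarith) hix))
        linarith
    _ = C₄ * (‖x' - sol x h‖ + h ^ (p + 1)) * ‖i x‖ := by rw [hC₄]; ring
end
end
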